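/- arXiv:1707.03218 — 5 statements merged into one kernel-verified Lean document; each statement's English description precedes it below -/
import Mathlib

section
/- For any finite alphabet A (with decidable equality), for all tuples a, b ∈ Aⁿ, the reflexive-transitive-symmetric closure of the relation a ∼ b (meaning there exist u ∈ A^{n-1} and two-element subsets I, J of {1,…,n} with a = u∘δ_I and b = u∘δ_J) relates a and b if and only if ofo(a) = ofo(b), where ofo(a) is the list of distinct symbols of a in order of first occurrence. -/
/-- `ofo` maps a string to the subsequence retaining only the first occurrence of each symbol. -/
def ofo {A : Type*} [DecidableEq A] : List A → List A
  | [] => []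
  | a :: l => a :: ofo (l.filter (· ≠ a))
termination_by l => l.length
decreasing_by
  simp only [List.length_cons]
  first
  | exact Nat.lt_succ_of_le (List.length_filter_le _ _)
  | exact Nat.lt_succ_of_le ((List.length_unattach).le.trans ((List.length_filter_le _ _).trans (List.length_attach).le))
  | exact Nat.lt_succ_of_le (by simpa using List.length_filter_le _ l.attach)

/-- For `I = {i, j}` with `i < j` (0-indexed, in `Fin (n+1)`), the map
`δ_I : Fin (n+1) → Fin n`: `m ↦ m` for `m < j`, `j ↦ i`, `m ↦ m - 1` for `m > j`. -/
def deltaMap {n : ℕ} (i j : Fin (n+1)) (hij : (i:ℕ) < j) : Fin (n+1) → Fin n :=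
  fun m =>
    if _ : (m:ℕ) < j then ⟨m, by have := j.isLt; omega⟩
    else if _ : (m:ℕ) = j then ⟨i, by have := j.isLt; omega⟩
    else ⟨(m:ℕ) - 1, by have := m.isLt; omega⟩

/-!
Read a tuple `a : Fin (n+1) → A` as the word `List.ofFn a`. Then `a = w ∘ δ_{i,j}` says that `a` arises
from the shorter word `ofFn w` by inserting, at position `j`, a copy of the letter at the earlier
position `i`; so `∼` exchanges one repeated letter for another. Repeated letters are never first
occurrences, hence `ofo` is invariant. Conversely, every word with `ofo = x :: t` is connected to a
normal form `x :: (replicate m x ++ t)`: by induction from the right, appending a new letter to a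
normal form gives a normal form, and appending an old letter is one exchange away from appending
another copy of `x`. Exchanges preserve length, which determines `m`.
-/

namespace Relation.EqvGen

variable {α β γ : Type*}

theorem map {r : α → α → Prop} {s : β → β → Prop} (f : α → β)
    (hf : ∀ x y, r x y → s (f x) (f y)) {x y : α} (h : EqvGen r x y) : EqvGen s (f x) (f y) := by
  induction h with
  | rel x y hxy => exact .rel _ _ (hf x y hxy)
  | refl => exact .refl _
  | symm _ _ _ ih => exact .symm _ _ ih
  | trans _ _ _ _ _ ih₁ ih₂ => exact .trans _ _ _ ih₁ ih₂

theorem apply_eq {r : α → α → Prop} (g : α → γ) (hg : ∀ x y, r x y → g x = g y) {x y : α}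
    (h : EqvGen r x y) : g x = g y :=
  eq_equivalence.eqvGen_iff.1 (h.map g hg)

theorem comap {s : β → β → Prop} {f : α → β} (hf : Function.Injective f)
    (hs : ∀ y y', s y y' → (y ∈ Set.range f ↔ y' ∈ Set.range f)) {x x' : α}
    (h : EqvGen s (f x) (f x')) : EqvGen (InvImage s f) x x' := by
  suffices ∀ y y', EqvGen s y y' → ∀ a b, f a = y → f b = y' → EqvGen (InvImage s f) a b from
    this _ _ h x x' rfl rfl
  intro y y' h
  induction h with
  | rel y y' hy => rintro a b rfl rfl; exact .rel _ _ hy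
  | refl => rintro a b rfl hab; rw [hf hab]; exact .refl _
  | symm _ _ _ ih => exact fun a b ha hb => .symm _ _ (ih b a hb ha)
  | trans y z y' hyz _ ih₁ ih₂ =>
    rintro a b rfl hb
    obtain ⟨c, rfl⟩ : z ∈ Set.range f :=
      hyz.apply_eq (· ∈ Set.range f) (fun _ _ h => propext (hs _ _ h)) ▸ ⟨a, rfl⟩
    exact .trans _ _ _ (ih₁ a c rfl rfl) (ih₂ c b rfl hb)

end Relation.EqvGen

section Ofo

variable {A : Type*} [DecidableEq A]

open List

@[simp] theorem ofo_nil : ofo ([] : List A) = [] := by rw [ofo]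

@[simp] theorem ofo_cons (a : A) (l : List A) : ofo (a :: l) = a :: ofo (l.filter (· ≠ a)) := by
  rw [ofo]

theorem mem_ofo {x : A} : ∀ {l : List A}, x ∈ ofo l ↔ x ∈ l
  | [] => by simp
  | a :: l => by
    have := @mem_ofo x (l.filter (· ≠ a))
    by_cases x = a <;> simp_all
termination_by l => l.length
decreasing_by exact Nat.lt_succ_of_le (length_filter_le _ _)

theorem ofo_eq_nil_iff {l : List A} : ofo l = [] ↔ l = [] := by
  cases l <;> simp

theorem ofo_append : ∀ l r : List A, ofo (l ++ r) = ofo l ++ ofo (r.filter (· ∉ l))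
  | [], r => by simp
  | a :: l, r => by
    rw [cons_append, ofo_cons, ofo_cons, filter_append, ofo_append, filter_filter, cons_append]
    congr 3
    apply filter_congr
    intro y _
    by_cases y = a <;> simp_all
termination_by l => l.length
decreasing_by exact Nat.lt_succ_of_le (length_filter_le _ _)

theorem ofo_append_cons_of_mem {P Q : List A} {x : A} (hx : x ∈ P) :
    ofo (P ++ x :: Q) = ofo (P ++ Q) := by
  rw [ofo_append, ofo_append, filter_cons_of_neg (by simpa)]

theorem ofo_append_singleton_of_mem {l : List A} {z : A} (hz : z ∈ l) : ofo (l ++ [z]) = ofo l := by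
  simpa using ofo_append_cons_of_mem (Q := []) hz

theorem ofo_append_singleton_of_not_mem {l : List A} {z : A} (hz : z ∉ l) :
    ofo (l ++ [z]) = ofo l ++ [z] := by
  rw [ofo_append, filter_singleton]
  simp [hz]

end Ofo

section Exchange

variable {A : Type*}

open List Relation

def DupInsert (N L : List A) : Prop :=
  ∃ P Q, ∃ x ∈ P, N = P ++ Q ∧ L = P ++ x :: Q

def DupExchange (L M : List A) : Prop :=
  ∃ N, DupInsert N L ∧ DupInsert N M

theorem DupInsert.length_eq {N L : List A} (h : DupInsert N L) : L.length = N.length + 1 := by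
  obtain ⟨P, Q, x, -, rfl, rfl⟩ := h
  simp only [length_append, length_cons]
  omega

theorem DupExchange.length_eq {L M : List A} (h : DupExchange L M) : L.length = M.length := by
  obtain ⟨N, hL, hM⟩ := h
  rw [hL.length_eq, hM.length_eq]

theorem DupInsert.append_right {N L : List A} (h : DupInsert N L) (R : List A) :
    DupInsert (N ++ R) (L ++ R) := by
  obtain ⟨P, Q, x, hx, rfl, rfl⟩ := h
  exact ⟨P, Q ++ R, x, hx, by simp, by simp⟩

theorem DupExchange.append_right {L M : List A} (h : DupExchange L M) (R : List A) :
    DupExchange (L ++ R) (M ++ R) := by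
  obtain ⟨N, hL, hM⟩ := h
  exact ⟨N ++ R, hL.append_right R, hM.append_right R⟩

theorem dupInsert_append_singleton {N : List A} {z : A} (hz : z ∈ N) : DupInsert N (N ++ [z]) :=
  ⟨N, [], z, hz, by simp, rfl⟩

theorem dupInsert_cons_cons (x : A) (l : List A) : DupInsert (x :: l) (x :: x :: l) :=
  ⟨[x], l, x, mem_singleton_self x, rfl, rfl⟩

theorem DupInsert.ofo_eq [DecidableEq A] {N L : List A} (h : DupInsert N L) : ofo L = ofo N := by
  obtain ⟨P, Q, x, hx, rfl, rfl⟩ := h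
  exact ofo_append_cons_of_mem hx

theorem DupExchange.ofo_eq [DecidableEq A] {L M : List A} (h : DupExchange L M) :
    ofo L = ofo M := by
  obtain ⟨N, hL, hM⟩ := h
  rw [hL.ofo_eq, hM.ofo_eq]

def padHead : List A → ℕ → List A
  | [], _ => []
  | x :: t, m => x :: (replicate m x ++ t)

theorem padHead_eq_of_length_eq {c : List A} {m m' : ℕ}
    (h : (padHead c m).length = (padHead c m').length) : padHead c m = padHead c m' := by
  cases c <;> simp_all [padHead]

theorem dupExchange_padHead_append_singleton {c : List A} {z : A} (hz : z ∈ c) (m : ℕ) :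
    DupExchange (padHead c m ++ [z]) (padHead c (m + 1)) := by
  cases c with
  | nil => simp at hz
  | cons x t =>
    refine ⟨padHead (x :: t) m, dupInsert_append_singleton ?_, ?_⟩
    · simp only [padHead, mem_cons, mem_append, mem_replicate] at hz ⊢
      tauto
    · simpa [padHead, replicate_succ] using dupInsert_cons_cons x (replicate m x ++ t)

theorem exists_eqvGen_padHead [DecidableEq A] (L : List A) :
    ∃ m, EqvGen DupExchange L (padHead (ofo L) m) := by
  induction L using List.reverseRecOn with
  | nil => exact ⟨0, by simpa [padHead] using .refl _⟩
  | append_singleton L z ih =>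
    obtain ⟨m, hm⟩ := ih
    have hmz := hm.map (· ++ [z]) fun _ _ h => h.append_right [z]
    by_cases hz : z ∈ L
    · rw [ofo_append_singleton_of_mem hz]
      exact ⟨m + 1, .trans _ _ _ hmz
        (.rel _ _ (dupExchange_padHead_append_singleton (mem_ofo.2 hz) m))⟩
    · rw [ofo_append_singleton_of_not_mem hz]
      cases hc : ofo L with
      | nil => exact ⟨0, by simpa [ofo_eq_nil_iff.1 hc, padHead] using .refl _⟩
      | cons x t => exact ⟨m, by simpa [hc, padHead] using hmz⟩

theorem eqvGen_dupExchange_of_ofo_eq [DecidableEq A] {L M : List A}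
    (hlen : L.length = M.length) (h : ofo L = ofo M) : EqvGen DupExchange L M := by
  obtain ⟨m, hL⟩ := exists_eqvGen_padHead L
  obtain ⟨m', hM⟩ := exists_eqvGen_padHead M
  have hlen' := (hL.apply_eq length fun _ _ h => h.length_eq).symm.trans
    (hlen.trans (hM.apply_eq length fun _ _ h => h.length_eq))
  rw [h] at hL hlen'
  rw [padHead_eq_of_length_eq hlen'] at hL
  exact .trans _ _ _ hL (.symm _ _ hM)

end Exchange

section Tuples

variable {A : Type*} {n : ℕ}

open List Relation

theorem List.insertIdx_eq_take_append_drop {l : List A} {j : ℕ} (hj : j ≤ l.length) (x : A) :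
    l.insertIdx j x = l.take j ++ x :: l.drop j := by
  induction l generalizing j with
  | nil => simp_all
  | cons a l ih =>
    cases j with
    | zero => simp
    | succ j => simp [insertIdx_succ_cons, ih (by simpa using hj)]

theorem ofFn_comp_deltaMap (w : Fin n → A) (i j : Fin (n + 1)) (hij : (i : ℕ) < j) :
    ofFn (w ∘ deltaMap i j hij) = (ofFn w).insertIdx j (w ⟨i, by omega⟩) := by
  refine ext_getElem (by simp [length_insertIdx]; omega) fun m h₁ h₂ => ?_
  simp only [List.getElem_ofFn, getElem_insertIdx, Function.comp_apply, deltaMap]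
  split_ifs <;> rfl

theorem mem_range_ofFn_iff {L : List A} :
    L ∈ Set.range (ofFn : (Fin n → A) → List A) ↔ L.length = n := by
  refine ⟨by rintro ⟨w, rfl⟩; simp, fun h => ?_⟩
  subst h
  exact ⟨fun m => L[m.1], ofFn_getElem⟩

theorem dupInsert_ofFn_iff (w : Fin n → A) (a : Fin (n + 1) → A) :
    DupInsert (ofFn w) (ofFn a) ↔
      ∃ (i j : Fin (n + 1)) (hij : (i : ℕ) < j), a = w ∘ deltaMap i j hij := by
  constructor
  · rintro ⟨P, Q, x, hx, hw, ha⟩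
    obtain ⟨i, hi, rfl⟩ := getElem_of_mem hx
    have hlen : P.length + Q.length = n := by simpa using (congrArg length hw).symm
    refine ⟨⟨i, by omega⟩, ⟨P.length, by omega⟩, hi, ofFn_injective ?_⟩
    rw [ha, ofFn_comp_deltaMap, insertIdx_eq_take_append_drop (by simp; omega)]
    have hwi : w ⟨i, by omega⟩ = P[i] := by
      simpa [getElem?_append_left hi, show i < n by omega, getElem?_eq_getElem hi]
        using congrArg (·[i]?) hw
    simp [hw, hwi]
  · rintro ⟨i, j, hij, rfl⟩
    rw [ofFn_comp_deltaMap, insertIdx_eq_take_append_drop (by simp; omega)]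
    refine ⟨_, _, _, mem_iff_getElem.2 ⟨i, by simp; omega, by simp⟩, (take_append_drop _ _).symm, rfl⟩

theorem dupExchange_ofFn_iff (a b : Fin (n + 1) → A) :
    DupExchange (ofFn a) (ofFn b) ↔
      ∃ (w : Fin n → A) (i j p q : Fin (n + 1)) (hij : (i : ℕ) < j) (hpq : (p : ℕ) < q),
        a = w ∘ deltaMap i j hij ∧ b = w ∘ deltaMap p q hpq := by
  constructor
  · rintro ⟨N, ha, hb⟩
    obtain ⟨w, rfl⟩ := mem_range_ofFn_iff.2 (by simpa using ha.length_eq.symm : N.length = n)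
    obtain ⟨i, j, hij, rfl⟩ := (dupInsert_ofFn_iff w a).1 ha
    obtain ⟨p, q, hpq, rfl⟩ := (dupInsert_ofFn_iff w b).1 hb
    exact ⟨w, i, j, p, q, hij, hpq, rfl, rfl⟩
  · rintro ⟨w, i, j, p, q, hij, hpq, rfl, rfl⟩
    exact ⟨ofFn w, (dupInsert_ofFn_iff w _).2 ⟨i, j, hij, rfl⟩,
      (dupInsert_ofFn_iff w _).2 ⟨p, q, hpq, rfl⟩⟩

end Tuples

/-- for tuples `a, b ∈ A^{n+1}`, the reflexive-transitive-symmetric closure of the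
relation `a ∼ b` (there exist `u ∈ Aⁿ` and 2-element index sets `I = {i,j}`, `J = {p,q}` with
`a = u ∘ δ_I` and `b = u ∘ δ_J`) relates `a` and `b` iff `ofo a = ofo b`. -/
theorem stmt3 {A : Type*} [DecidableEq A] {n : ℕ} (a b : Fin (n+1) → A) :
    Relation.EqvGen
      (fun u v : Fin (n+1) → A =>
        ∃ (w : Fin n → A) (i j p q : Fin (n+1)) (hij : (i:ℕ) < j) (hpq : (p:ℕ) < q),
          u = w ∘ deltaMap i j hij ∧ v = w ∘ deltaMap p q hpq) a b ↔
    ofo (List.ofFn a) = ofo (List.ofFn b) := by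
  simp only [← dupExchange_ofFn_iff]
  refine ⟨fun h => h.apply_eq (ofo ∘ List.ofFn) fun _ _ h => h.ofo_eq, fun h => ?_⟩
  refine .comap List.ofFn_injective (fun L M hLM => ?_) (eqvGen_dupExchange_of_ofo_eq (by simp) h)
  rw [mem_range_ofFn_iff, mem_range_ofFn_iff, hLM.length_eq]
end

section
/- Every function f : Aⁿ → B that is determined by cs (content and singletons) has a unique identification minor; that is, for all 2-element subsets I, J of {1,…,n}, the identification minors f_I and f_J are similar (f_I = f_J ∘ τ̂ for some permutation τ of {1,…,n-1}). -/
/-- `singles l` is the list of entries of `l` occurring exactly once in `l`,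
in their order of occurrence. -/
def singles {A : Type*} [DecidableEq A] (l : List A) : List A :=
  l.filter (fun a => l.count a = 1)

/-!
Write `v := a i` and `r` for `a` with position `i` removed. Then `a ∘ δ_{i,j}` is `r` with two
copies of `v` inserted, at positions `i` and `j`. Choose `τ` moving position `p` to `i` and keeping
the other positions in order; then `(a ∘ τ) ∘ δ_{p,q}` is also `r` with two copies of `v` inserted,
just at other positions. Inserting two copies of `v` always gives the content `v + v + ms(r)`. It
also gives the same singles: `v` is not a single, and the entries `≠ v` keep the order they have
in `r`.
-/

section

variable {α : Type*}

theorem List.filter_insertIdx_of_neg {p : α → Bool} {v : α} (hv : ¬p v) (l : List α)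
    (k : ℕ) : (l.insertIdx k v).filter p = l.filter p := by
  induction l generalizing k with
  | nil => cases k <;> simp [hv]
  | cons x l ih => cases k <;> simp [List.filter_cons, hv, ih]

theorem List.ofFn_insertNth {n : ℕ} (k : Fin (n + 1)) (v : α) (r : Fin n → α) :
    List.ofFn (Fin.insertNth k v r) = (List.ofFn r).insertIdx k v := by
  induction n with
  | zero => obtain rfl := Fin.fin_one_eq_zero k; simp [Fin.insertNth_zero']
  | succ n ih =>
    cases k using Fin.cases with
    | zero => simp [Fin.insertNth_zero']
    | succ k =>
      rw [← Fin.cons_self_tail r, Fin.insertNth_succ_cons, List.ofFn_cons, List.ofFn_cons, ih]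
      rfl

theorem List.perm_ofFn_insertNth {n : ℕ} (k : Fin (n + 1)) (v : α) (r : Fin n → α) :
    (List.ofFn (Fin.insertNth k v r)).Perm (v :: List.ofFn r) := by
  rw [List.ofFn_insertNth]
  exact List.perm_insertIdx v _ (by simpa using Nat.le_of_lt_succ k.isLt)

theorem List.filter_ofFn_insertNth {n : ℕ} {p : α → Bool} {v : α} (hv : ¬p v)
    (k : Fin (n + 1)) (r : Fin n → α) :
    (List.ofFn (Fin.insertNth k v r)).filter p = (List.ofFn r).filter p := by
  rw [List.ofFn_insertNth, List.filter_insertIdx_of_neg hv]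

section ContentSingles

variable [DecidableEq α]

def cs (l : List α) : Multiset α × List α := (l, singles l)

theorem singles_eq_filter_filter_ne {l : List α} {v : α} (hv : l.count v ≠ 1) :
    singles l = (l.filter (· ≠ v)).filter (fun a => l.count a = 1) := by
  rw [singles, List.filter_filter]
  refine List.filter_congr fun a _ => ?_
  by_cases h : a = v <;> simp_all

theorem cs_eq_of_perm_of_filter_ne_eq {l₁ l₂ : List α} {v : α} (hp : l₁.Perm l₂)
    (hv : l₁.count v ≠ 1) (hf : l₁.filter (· ≠ v) = l₂.filter (· ≠ v)) : cs l₁ = cs l₂ := by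
  have hv₂ : l₂.count v ≠ 1 := hp.count_eq v ▸ hv
  rw [cs, cs, singles_eq_filter_filter_ne hv, singles_eq_filter_filter_ne hv₂, hf,
    Multiset.coe_eq_coe.2 hp]
  simp only [hp.count_eq]

theorem cs_ofFn_insertNth_insertNth {n : ℕ} (v : α) (r : Fin n → α) (k₁ k₂ : Fin (n + 2))
    (l₁ l₂ : Fin (n + 1)) :
    cs (List.ofFn (Fin.insertNth k₁ v (Fin.insertNth l₁ v r))) =
      cs (List.ofFn (Fin.insertNth k₂ v (Fin.insertNth l₂ v r))) := by
  have hp : ∀ (k : Fin (n + 2)) (l : Fin (n + 1)),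
      (List.ofFn (Fin.insertNth k v (Fin.insertNth l v r))).Perm (v :: v :: List.ofFn r) :=
    fun k l => (List.perm_ofFn_insertNth k v _).trans ((List.perm_ofFn_insertNth l v r).cons v)
  have hf : ∀ (k : Fin (n + 2)) (l : Fin (n + 1)),
      (List.ofFn (Fin.insertNth k v (Fin.insertNth l v r))).filter (· ≠ v) =
        (List.ofFn r).filter (· ≠ v) := fun k l => by
    rw [List.filter_ofFn_insertNth (by simp), List.filter_ofFn_insertNth (by simp)]
  refine cs_eq_of_perm_of_filter_ne_eq ((hp k₁ l₁).trans (hp k₂ l₂).symm) ?_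
    ((hf k₁ l₁).trans (hf k₂ l₂).symm)
  rw [(hp k₁ l₁).count_eq]
  simp

end ContentSingles

theorem deltaMap_self {n : ℕ} (i j : Fin (n + 1)) (hij : (i : ℕ) < j) :
    deltaMap i j hij j = ⟨i, by omega⟩ := by
  simp [deltaMap]

theorem deltaMap_succAbove {n : ℕ} (i j : Fin (n + 1)) (hij : (i : ℕ) < j) (k : Fin n) :
    deltaMap i j hij (j.succAbove k) = k := by
  by_cases hk : (k : ℕ) < j
  · rw [Fin.succAbove_of_castSucc_lt _ _ hk]
    simp [deltaMap, hk]
  · rw [Fin.succAbove_of_le_castSucc _ _ (Fin.le_def.2 (by simpa using hk))]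
    have h₁ : ¬ (k : ℕ) + 1 < j := by omega
    have h₂ : (k : ℕ) + 1 ≠ j := by omega
    simp [deltaMap, h₁, h₂]

theorem comp_deltaMap {n : ℕ} (a : Fin n → α) (i j : Fin (n + 1)) (hij : (i : ℕ) < j) :
    a ∘ deltaMap i j hij = Fin.insertNth j (a ⟨i, by omega⟩) a := by
  rw [Fin.eq_insertNth_iff]
  refine ⟨by simp [deltaMap_self], funext fun k => ?_⟩
  simp [Fin.removeNth, deltaMap_succAbove]

theorem exists_perm_comp_eq_insertNth_removeNth {n : ℕ} (i p : Fin (n + 1)) :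
    ∃ τ : Equiv.Perm (Fin (n + 1)), ∀ a : Fin (n + 1) → α,
      a ∘ τ = Fin.insertNth p (a i) (Fin.removeNth i a) := by
  refine ⟨(finSuccEquiv' p).trans (finSuccEquiv' i).symm, fun a => ?_⟩
  rw [Fin.eq_insertNth_iff]
  refine ⟨by simp, funext fun k => ?_⟩
  simp [Fin.removeNth]

end

/-- every function `f : A^{n+1} → B` determined by content and singletons
(i.e., `f a = f*(ms a, singles a)`) has a unique identification minor: for all 2-element
index sets `I = {i,j}` and `J = {p,q}` there is a permutation `τ` of `Fin n` with
`f_I = f_J ∘ τ̂`, where `f_I(a) = f(a ∘ δ_I)` and `τ̂(a) = a ∘ τ`. -/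
theorem stmt6 {A B : Type*} [DecidableEq A] {n : ℕ} (f : (Fin (n+1) → A) → B)
    (fstar : Multiset A × List A → B)
    (hf : ∀ a : Fin (n+1) → A,
      f a = fstar (↑(List.ofFn a), singles (List.ofFn a))) :
    ∀ (i j p q : Fin (n+1)) (hij : (i:ℕ) < j) (hpq : (p:ℕ) < q),
      ∃ τ : Equiv.Perm (Fin n),
        ∀ a : Fin n → A,
          f (a ∘ deltaMap i j hij) = f ((a ∘ ⇑τ) ∘ deltaMap p q hpq) := by
  intro i j p q hij hpq
  obtain ⟨m, rfl⟩ : ∃ m, n = m + 1 := ⟨n - 1, by omega⟩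
  obtain ⟨τ, hτ⟩ :=
    exists_perm_comp_eq_insertNth_removeNth (α := A) (n := m) ⟨i, by omega⟩ ⟨p, by omega⟩
  refine ⟨τ, fun a => ?_⟩
  obtain ⟨v, r, rfl⟩ : ∃ v r, a = Fin.insertNth (⟨i, by omega⟩ : Fin (m + 1)) v r :=
    ⟨_, _, (Fin.insertNth_self_removeNth _ a).symm⟩
  have hcs : ∀ x, f x = fstar (cs (List.ofFn x)) := hf
  rw [hcs, hcs, comp_deltaMap, comp_deltaMap, hτ]
  simp only [Fin.insertNth_apply_same, Fin.removeNth_insertNth]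
  exact congrArg fstar (cs_ofFn_insertNth_insertNth ..)
end

section
/- If |A| = 2, n ≥ 3, and f : Aⁿ → B is determined by cs, then f is totally symmetric, i.e., f(a∘σ) = f(a) for every permutation σ of {1,…,n} and every a ∈ Aⁿ. -/
/-!
Both `f (a ∘ σ)` and `f a` are computed by `fstar` from data that agree up to reordering:
the multisets coincide and the lists of singletons are permutations of each other. Over a
two-letter alphabet a word of length at least three cannot contain both letters exactly once,
so its list of singletons has length at most one, and such a list is determined by its
permutation class.
-/

theorem List.Perm.eq_of_length_le_one {A : Type*} {l₁ l₂ : List A} (h : l₁.Perm l₂)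
    (hl : l₁.length ≤ 1) : l₁ = l₂ := by
  match l₁, hl with
  | [], _ => exact h.nil_eq
  | [_], _ => exact List.singleton_perm.1 h

section Singles

variable {A : Type*} [DecidableEq A]

theorem singles_perm {l₁ l₂ : List A} (h : l₁.Perm l₂) : (singles l₁).Perm (singles l₂) := by
  simp only [singles, h.count_eq]
  exact h.filter _

theorem nodup_singles (l : List A) : (singles l).Nodup := by
  refine List.nodup_iff_count_le_one.2 fun a => ?_
  have hle : (singles l).count a ≤ l.count a := List.filter_sublist.count_le a
  by_cases ha : l.count a = 1
  · omega
  · rw [List.count_eq_zero.2 fun hmem => ha (by simpa [singles] using (List.mem_filter.1 hmem).2)]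
    omega

/-- If every letter were a singleton, the word would have length exactly `Fintype.card A`. -/
theorem length_singles_lt_card [Fintype A] {l : List A} (hl : Fintype.card A < l.length) :
    (singles l).length < Fintype.card A := by
  refine lt_of_le_of_ne (nodup_singles l).length_le_card fun hcard => hl.ne ?_
  have huniv : (singles l).toFinset = Finset.univ :=
    Finset.eq_univ_of_card _ (by rw [List.toFinset_card_of_nodup (nodup_singles l), hcard])
  have hcount : ∀ a, l.count a = 1 := fun a => by
    have := List.mem_toFinset.1 (huniv ▸ Finset.mem_univ a)
    simpa [singles] using (List.mem_filter.1 this).2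
  calc Fintype.card A = ∑ a : A, l.count a := by simp [hcount]
    _ = l.length := by
      simpa using Multiset.sum_count_eq_card (s := Finset.univ) (m := (l : Multiset A)) (by simp)

end Singles

/-- if `|A| = 2`, `n ≥ 3`, and `f : Aⁿ → B` is determined by content and
singletons, then `f` is totally symmetric. -/
theorem stmt8 {A B : Type*} [Fintype A] [DecidableEq A] (hA : Fintype.card A = 2)
    {n : ℕ} (hn : 3 ≤ n) (f : (Fin n → A) → B)
    (fstar : Multiset A × List A → B)
    (hf : ∀ a : Fin n → A, f a = fstar (↑(List.ofFn a), singles (List.ofFn a))) :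
    ∀ (σ : Equiv.Perm (Fin n)) (a : Fin n → A), f (a ∘ ⇑σ) = f a := by
  intro σ a
  have hperm : (List.ofFn (a ∘ σ)).Perm (List.ofFn a) := σ.ofFn_comp_perm a
  have hshort : (singles (List.ofFn (a ∘ σ))).length ≤ 1 := by
    have := length_singles_lt_card (l := List.ofFn (a ∘ σ)) (by rw [List.length_ofFn]; omega)
    omega
  rw [hf, hf, Multiset.coe_eq_coe.2 hperm, (singles_perm hperm).eq_of_length_le_one hshort]
end

section
/- Let A = {1,…,k} with k ≥ 3, B contain at least two elements 0,1, and n ≥ k+1. Define f : Aⁿ → B by f(a) = 1 if the multiset of entries of a is {1^{n-k+1}, 2, 3, …, k} and the entries distinct from 1 appear in a in increasing order, and f(a) = 0 otherwise. Then the invariance group of f is trivial: the only permutation σ ∈ Sₙ with f(a∘σ) = f(a) for all a is the identity. -/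
/-!
If `σ` leaves `f` invariant, it maps good tuples to good tuples, since `f` separates good tuples
from the rest. Given `i < j`, take a good tuple whose nonzero entries sit at `σ i`, `σ j` and `k`
further positions, numbered increasingly; sortedness of its composite with `σ` forces
`σ i < σ j`. So `σ` is strictly monotone, and the only strictly monotone permutation of a
finite chain is the identity.
-/

/-- `goodTuple k n a` says the content of `a` consists of `n - (k+3) + 1` occurrences of `0`
together with exactly one occurrence of every other element of `Fin (k+3)`, and the entries
distinct from `0` appear in `a` in increasing order. (Here the alphabet `A = Fin (k+3)`
plays the role of `{1, …, k}` with `k ≥ 3`, the element `0` playing the role of `1`.) -/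
def goodTuple (k n : ℕ) (a : Fin n → Fin (k+3)) : Prop :=
  (↑(List.ofFn a) : Multiset (Fin (k+3))) =
      Multiset.replicate (n - (k+3) + 1) 0 + ((Finset.univ : Finset (Fin (k+3))).erase 0).val ∧
    List.Pairwise (· < ·) ((List.ofFn a).filter (· ≠ 0))

theorem Equiv.Perm.eq_one_of_strictMono {α : Type*} [LinearOrder α] [WellFoundedLT α]
    {σ : Equiv.Perm α} (hσ : StrictMono σ) : σ = 1 := by
  ext x
  exact congrArg (· x) (Subsingleton.elim (hσ.orderIsoOfSurjective σ σ.surjective) (.refl α))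

lemma pairwise_lt_filter_ofFn_ne_zero_iff {n m : ℕ} (a : Fin n → Fin (m+1)) :
    ((List.ofFn a).filter (· ≠ 0)).Pairwise (· < ·) ↔
      ∀ ⦃i j⦄, i < j → a i ≠ 0 → a j ≠ 0 → a i < a j := by
  rw [List.pairwise_filter, List.pairwise_ofFn]
  simp

section SupportTuple

variable {n m : ℕ} {S : Finset (Fin n)} (hS : S.card = m)

/-- Numbers the points of `S` by `1, …, m` from left to right and vanishes off `S`. -/
noncomputable def supportTuple : Fin n → Fin (m+1) :=
  fun p => if h : p ∈ S then ((S.orderIsoOfFin hS).symm ⟨p, h⟩).succ else 0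

lemma supportTuple_eq_zero_iff {p : Fin n} : supportTuple hS p = 0 ↔ p ∉ S := by
  unfold supportTuple
  split_ifs with h <;> simp [h, Fin.succ_ne_zero]

lemma supportTuple_ne_zero_iff {p : Fin n} : supportTuple hS p ≠ 0 ↔ p ∈ S := by
  rw [Ne, supportTuple_eq_zero_iff, not_not]

lemma supportTuple_strictMonoOn : StrictMonoOn (supportTuple hS) S := by
  intro p hp q hq hpq
  rw [Finset.mem_coe] at hp hq
  simpa [supportTuple, hp, hq] using hpq

lemma supportTuple_orderEmbOfFin (i : Fin m) :
    supportTuple hS (S.orderEmbOfFin hS i) = i.succ := by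
  simp [supportTuple, ← Finset.coe_orderIsoOfFin_apply]

lemma map_supportTuple : S.val.map (supportTuple hS) = (Finset.univ.erase 0).val := by
  have hcomp : supportTuple hS ∘ S.orderEmbOfFin hS = Fin.succ :=
    funext (supportTuple_orderEmbOfFin hS)
  rw [← congrArg Finset.val (S.map_orderEmbOfFin_univ hS), Finset.map_val, Multiset.map_map,
    RelEmbedding.coe_toEmbedding, hcomp, Fin.univ_succ, Finset.erase_cons, Finset.map_val]
  rfl

lemma map_supportTuple_compl : Sᶜ.val.map (supportTuple hS) = .replicate (n - m) 0 := by
  rw [Multiset.eq_replicate]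
  refine ⟨by simp [Finset.card_compl, hS], fun b hb => ?_⟩
  obtain ⟨p, hp, rfl⟩ := Multiset.mem_map.mp hb
  exact (supportTuple_eq_zero_iff hS).mpr (Finset.mem_compl.mp hp)

lemma coe_ofFn_supportTuple :
    (↑(List.ofFn (supportTuple hS)) : Multiset (Fin (m+1))) =
      .replicate (n - m) 0 + (Finset.univ.erase 0).val := by
  have huniv : (Finset.univ : Finset (Fin n)).val = S.val + Sᶜ.val := by
    rw [← S.union_compl, ← S.disjUnion_eq_union Sᶜ disjoint_compl_right]
    rfl
  rw [← Fin.univ_val_map, huniv, Multiset.map_add, map_supportTuple, map_supportTuple_compl]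
  exact add_comm _ _

end SupportTuple

lemma goodTuple_supportTuple {k n : ℕ} (hn : k + 3 ≤ n) {S : Finset (Fin n)}
    (hS : S.card = k + 2) :
    goodTuple k n (supportTuple hS) := by
  refine ⟨?_, (pairwise_lt_filter_ofFn_ne_zero_iff _).mpr fun i j hij hi hj => ?_⟩
  · rw [coe_ofFn_supportTuple]
    congr 2
    omega
  · exact supportTuple_strictMonoOn hS ((supportTuple_ne_zero_iff hS).mp hi)
      ((supportTuple_ne_zero_iff hS).mp hj) hij

lemma strictMono_of_forall_goodTuple_comp {k n : ℕ} (hn : k + 3 ≤ n) {σ : Equiv.Perm (Fin n)}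
    (hσ : ∀ a, goodTuple k n a → goodTuple k n (a ∘ σ)) : StrictMono σ := by
  intro i j hij
  obtain ⟨S, hsub, hS⟩ := Finset.exists_superset_card_eq (s := {σ i, σ j}) (n := k + 2)
    ((Finset.card_le_two).trans (by omega)) (by rw [Fintype.card_fin]; omega)
  have hi : σ i ∈ S := hsub (by simp)
  have hj : σ j ∈ S := hsub (by simp)
  have hsorted := (hσ _ (goodTuple_supportTuple hn hS)).2
  have hlt := (pairwise_lt_filter_ofFn_ne_zero_iff _).mp hsorted hij
    ((supportTuple_ne_zero_iff hS).mpr hi) ((supportTuple_ne_zero_iff hS).mpr hj)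
  exact ((supportTuple_strictMonoOn hS).lt_iff_lt hi hj).mp hlt

/-- for `|A| = k + 3 ≥ 3`, `n ≥ (k+3) + 1`, and `b0 ≠ b1` in `B`, the function
`f : Aⁿ → B` taking value `b1` exactly on the good tuples and `b0` elsewhere has trivial
invariance group: the only `σ ∈ Sₙ` with `f(a ∘ σ) = f(a)` for all `a` is the identity. -/
theorem stmt10 {B : Type*} (k n : ℕ) (hn : k + 4 ≤ n) (b0 b1 : B) (hb : b0 ≠ b1)
    (f : (Fin n → Fin (k+3)) → B)
    (hf : ∀ a : Fin n → Fin (k+3),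
      (goodTuple k n a → f a = b1) ∧ (¬ goodTuple k n a → f a = b0)) :
    ∀ σ : Equiv.Perm (Fin n), (∀ a, f (a ∘ ⇑σ) = f a) → σ = 1 := by
  intro σ hσ
  have hgood : ∀ a, goodTuple k n a → goodTuple k n (a ∘ σ) := by
    intro a ha
    by_contra hbad
    have hb0 := (hf _).2 hbad
    rw [hσ] at hb0
    exact hb (hb0.symm.trans ((hf a).1 ha))
  exact Equiv.Perm.eq_one_of_strictMono (strictMono_of_forall_goodTuple_comp (by omega) hgood)
end

section
/- Let 3 ≤ ℓ ≤ n-1 and let σ ∈ Sₙ be the direct sum of descending permutations ι_m ⊕ ι_{n-m} for some 0 ≤ m ≤ n-1 (i.e., σ reverses {1,…,m} and reverses {m+1,…,n} within themselves, σ(i) = m+1-i for i ≤ m and σ(i) = n + m + 1 - i for i > m). Then ⟨Δ Pat^ℓ(σ)⟩ ∩ Pat^ℓ(σ) = ∅, i.e., σ is ℓ-differentiating. -/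
/-!
Let `e : Fin ℓ ↪o Fin n` enumerate `S`. The pattern `σ_S` has the same relative order as
`σ ∘ e`, and a permutation of a finite linear order is determined by its relative order. Since
`e` is monotone, `e⁻¹[0, m)` is an initial segment `[0, p)`, so `σ_S` has the relative order of
`ι_p ⊕ ι_{ℓ-p}`, which in `ℤ/ℓ` is the reflection `i ↦ (p - 1) - i`. Hence `Δ Pat^ℓ(σ)` consists
of translations `i ↦ c + i`, which form a subgroup, and a translation is never a reflection
once `1 + 1 ≠ 0` in `ℤ/ℓ`, i.e. `ℓ ≥ 3`.
-/

/-- The pattern `σ_S = h_{σ(S)}⁻¹ ∘ σ|_S ∘ h_S` of `σ` on `S`, as a permutation of `Fin k`,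
where `h_T : Fin |T| ≃o T` is the order-isomorphism. -/
def patPermE {n k : ℕ} (σ : Equiv.Perm (Fin n)) (S : Finset (Fin n)) (h : S.card = k) :
    Equiv.Perm (Fin k) :=
  ((S.orderIsoOfFin h).toEquiv.trans
    (({ toFun := fun x => ⟨σ x, Finset.mem_image_of_mem _ x.2⟩
        invFun := fun y => ⟨σ.symm y, by
          obtain ⟨x, hx, hxy⟩ := Finset.mem_image.mp y.2
          rw [← hxy, Equiv.symm_apply_apply]; exact hx⟩
        left_inv := fun x => Subtype.ext (σ.symm_apply_apply x)
        right_inv := fun y => Subtype.ext (σ.apply_symm_apply y) } :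
      {x // x ∈ S} ≃ {y // y ∈ S.image ⇑σ}))).trans
    ((S.image ⇑σ).orderIsoOfFin
      (by rw [Finset.card_image_of_injective S σ.injective, h])).toEquiv.symm

/-- `Pat^k(σ)`: the set of all `k`-patterns of `σ`. -/
def PatSet {n : ℕ} (k : ℕ) (σ : Equiv.Perm (Fin n)) : Set (Equiv.Perm (Fin k)) :=
  {τ | ∃ (S : Finset (Fin n)) (h : S.card = k), τ = patPermE σ S h}

/-- `ΔT = {x⁻¹ * y : x, y ∈ T}`. -/
def deltaSet {G : Type*} [Group G] (T : Set G) : Set G :=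
  {g | ∃ x ∈ T, ∃ y ∈ T, g = x⁻¹ * y}

/-- `ι_m ⊕ ι_{n-m}` on `{0, …, n-1}`, 0-indexed: reverse `[0, m)` and `[m, n)` in place. -/
def revBlocks (n m x : ℕ) : ℕ := if x < m then m - 1 - x else n + m - 1 - x

lemma revBlocks_lt_revBlocks_iff {n m x y : ℕ} (hx : x < n) (hy : y < n) :
    revBlocks n m x < revBlocks n m y ↔ x < m ∧ m ≤ y ∨ y < x ∧ (x < m ∨ m ≤ y) := by
  unfold revBlocks
  split_ifs <;> omega

lemma Fin.exists_mem_iff_val_lt_of_isLowerSet {k : ℕ} {s : Set (Fin k)} (hs : IsLowerSet s) :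
    ∃ p ≤ k, ∀ i : Fin k, i ∈ s ↔ (i : ℕ) < p := by
  classical
  refine ⟨(Finset.univ.filter (· ∈ s)).card, (Finset.card_filter_le _ _).trans_eq (by simp),
    fun i => ⟨fun hi => ?_, fun hi => ?_⟩⟩
  · have := Finset.card_le_card (s := Finset.Iic i) (t := Finset.univ.filter (· ∈ s))
      fun j hj => Finset.mem_filter.mpr ⟨Finset.mem_univ _, hs (Finset.mem_Iic.mp hj) hi⟩
    rw [Fin.card_Iic] at this
    omega
  · by_contra hi'
    have := Finset.card_le_card (s := Finset.univ.filter (· ∈ s)) (t := Finset.Iio i)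
      fun j hj => Finset.mem_Iio.mpr
        (lt_of_not_ge fun hij => hi' (hs hij (Finset.mem_filter.mp hj).2))
    rw [Fin.card_Iio] at this
    omega

lemma Equiv.Perm.coe_eq_of_lt_imp_lt {α : Type*} [LinearOrder α] [Finite α] {τ : Equiv.Perm α}
    {f : α → α} (h : ∀ i j, τ i < τ j → f i < f j) : ⇑τ = f := by
  have hmono : StrictMono (f ∘ τ.symm) := fun a b hab => h _ _ (by simpa using hab)
  funext i
  simpa using (congrFun hmono.eq_id (τ i)).symm

lemma patPermE_lt_patPermE_iff {n k : ℕ} (σ : Equiv.Perm (Fin n)) (S : Finset (Fin n))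
    (h : S.card = k) (i j : Fin k) :
    patPermE σ S h i < patPermE σ S h j ↔ σ (S.orderEmbOfFin h i) < σ (S.orderEmbOfFin h j) := by
  simp [patPermE]

open Fin.CommRing in
lemma Fin.val_natCast_sub_one_sub {ℓ p : ℕ} [NeZero ℓ] (hp : p ≤ ℓ) (i : Fin ℓ) :
    ((p : Fin ℓ) - 1 - i).val = revBlocks ℓ p i := by
  have hlt : revBlocks ℓ p i < ℓ := by unfold revBlocks; split_ifs <;> omega
  suffices h : ((revBlocks ℓ p i : ℕ) : Fin ℓ) + (i : ℕ) + 1 = p by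
    rw [← h, Fin.cast_val_eq_self]
    simp [Fin.val_natCast, Nat.mod_eq_of_lt hlt]
  unfold revBlocks
  split_ifs with hi
  · norm_cast
    congr 1
    omega
  · norm_cast
    rw [show ℓ + p - 1 - (i : ℕ) + i + 1 = p + ℓ by omega]
    simp

open Fin.CommRing in
theorem patPermE_mem_range_subLeft {n ℓ m : ℕ} [NeZero ℓ] {σ : Equiv.Perm (Fin n)}
    (hσ : ∀ i : Fin n, (σ i : ℕ) = revBlocks n m i) (S : Finset (Fin n)) (h : S.card = ℓ) :
    patPermE σ S h ∈ Set.range Equiv.subLeft := by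
  set e := S.orderEmbOfFin h
  obtain ⟨p, hpℓ, hp⟩ := Fin.exists_mem_iff_val_lt_of_isLowerSet (s := {i | (e i : ℕ) < m})
    fun _ _ hji hi => Nat.lt_of_le_of_lt (e.monotone hji) hi
  refine ⟨p - 1, DFunLike.coe_injective (Equiv.Perm.coe_eq_of_lt_imp_lt fun i j hij => ?_).symm⟩
  have hei : (e i : ℕ) < e j ↔ (i : ℕ) < j := e.lt_iff_lt
  have hej : (e j : ℕ) < e i ↔ (j : ℕ) < i := e.lt_iff_lt
  have hpi : (e i : ℕ) < m ↔ (i : ℕ) < p := hp i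
  have hpj : (e j : ℕ) < m ↔ (j : ℕ) < p := hp j
  rw [patPermE_lt_patPermE_iff, Fin.lt_def, hσ, hσ,
    revBlocks_lt_revBlocks_iff (e i).isLt (e j).isLt] at hij
  rw [Equiv.subLeft_apply, Equiv.subLeft_apply, Fin.lt_def, Fin.val_natCast_sub_one_sub hpℓ,
    Fin.val_natCast_sub_one_sub hpℓ, revBlocks_lt_revBlocks_iff i.isLt j.isLt]
  omega

def translations (G : Type*) [AddGroup G] : Subgroup (Equiv.Perm G) where
  carrier := Set.range Equiv.addLeft
  one_mem' := ⟨0, Equiv.addLeft_zero⟩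
  mul_mem' := by
    rintro _ _ ⟨c, rfl⟩ ⟨d, rfl⟩
    exact ⟨c + d, Equiv.addLeft_add c d⟩
  inv_mem' := by
    rintro _ ⟨c, rfl⟩
    exact ⟨-c, (Equiv.neg_addLeft c).symm⟩

lemma Equiv.subLeft_inv_mul_subLeft {G : Type*} [AddCommGroup G] (c d : G) :
    (Equiv.subLeft c)⁻¹ * Equiv.subLeft d = Equiv.addLeft (c - d) := by
  rw [inv_mul_eq_iff_eq_mul]
  ext x
  simp only [Equiv.Perm.mul_apply, Equiv.subLeft_apply, Equiv.coe_addLeft]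
  abel

lemma Equiv.subLeft_ne_addLeft {G : Type*} [AddCommGroup G] {x : G} (hx : x + x ≠ 0) (c d : G) :
    Equiv.subLeft d ≠ Equiv.addLeft c := by
  intro h
  have h0 := Equiv.ext_iff.mp h 0
  have hx' := Equiv.ext_iff.mp h x
  simp only [Equiv.subLeft_apply, Equiv.coe_addLeft, sub_zero, add_zero] at h0 hx'
  subst h0
  exact hx (by linear_combination (norm := abel) -hx')

lemma closure_deltaSet_inter_eq_empty {G : Type*} [AddCommGroup G] {x : G} (hx : x + x ≠ 0)
    {T : Set (Equiv.Perm G)} (hT : T ⊆ Set.range Equiv.subLeft) :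
    ↑(Subgroup.closure (deltaSet T)) ∩ T = ∅ := by
  have hΔ : deltaSet T ⊆ translations G := by
    rintro _ ⟨_, hy, _, hz, rfl⟩
    obtain ⟨c, rfl⟩ := hT hy
    obtain ⟨d, rfl⟩ := hT hz
    exact ⟨c - d, (Equiv.subLeft_inv_mul_subLeft c d).symm⟩
  refine Set.eq_empty_iff_forall_notMem.mpr fun τ ⟨hτΔ, hτ⟩ => ?_
  obtain ⟨c, rfl⟩ := (Subgroup.closure_le _).mpr hΔ hτΔ
  obtain ⟨d, hd⟩ := hT hτ
  exact Equiv.subLeft_ne_addLeft hx c d hd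

theorem stmt19_general {n ℓ m : ℕ} (hl : 3 ≤ ℓ)
    (σ : Equiv.Perm (Fin n))
    (hσ : ∀ i : Fin n,
      (σ i : ℕ) = if (i : ℕ) < m then m - 1 - (i : ℕ) else n + m - 1 - (i : ℕ)) :
    ↑(Subgroup.closure (deltaSet (PatSet ℓ σ))) ∩ PatSet ℓ σ =
      (∅ : Set (Equiv.Perm (Fin ℓ))) := by
  have : NeZero ℓ := ⟨by omega⟩
  have htwo : (1 : Fin ℓ) + 1 ≠ 0 := by
    rw [Ne, Fin.ext_iff, Fin.val_add, Fin.val_one', Nat.mod_eq_of_lt (by omega : 1 < ℓ),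
      Nat.mod_eq_of_lt (by omega : 1 + 1 < ℓ)]
    simp
  refine closure_deltaSet_inter_eq_empty htwo ?_
  rintro _ ⟨S, hS, rfl⟩
  exact patPermE_mem_range_subLeft hσ S hS

/-- let `3 ≤ ℓ ≤ n - 1` and let `σ ∈ Sₙ` be the direct sum of descending
permutations `ι_m ⊕ ι_{n-m}` for some `0 ≤ m ≤ n - 1` (in 0-indexed terms,
`σ(i) = m - 1 - i` for `i < m` and `σ(i) = n + m - 1 - i` for `i ≥ m`).
Then `⟨Δ Pat^ℓ(σ)⟩ ∩ Pat^ℓ(σ) = ∅`, i.e., `σ` is `ℓ`-differentiating. -/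
theorem stmt19 {n ℓ m : ℕ} (hl : 3 ≤ ℓ) (hln : ℓ ≤ n - 1) (hm : m ≤ n - 1)
    (σ : Equiv.Perm (Fin n))
    (hσ : ∀ i : Fin n,
      (σ i : ℕ) = if (i : ℕ) < m then m - 1 - (i : ℕ) else n + m - 1 - (i : ℕ)) :
    ↑(Subgroup.closure (deltaSet (PatSet ℓ σ))) ∩ PatSet ℓ σ =
      (∅ : Set (Equiv.Perm (Fin ℓ))) :=
  stmt19_general hl σ hσ
end
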